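/- arXiv:2111.04180 — 4 statements merged into one kernel-verified Lean document; each statement's English description precedes it below -/
import Mathlib

section
/- Let H be a separable infinite-dimensional complex Hilbert space with orthonormal (Hilbert) basis (e_n)_{n≥0} indexed by the natural numbers, let (w_n)_{n≥0} be a bounded sequence of nonzero complex numbers, and let S_w be a bounded linear operator on H satisfying S_w e_n = w_n e_{n+1} for all n ≥ 0. Then S_w can be written as S_w = S + K with S an isometry on H and K a compact operator on H if and only if |w_n| → 1 as n → ∞. -/
open ContinuousLinearMap Filter
open scoped ENNReal InnerProductSpace

noncomputable section

namespace WSA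

variable {H : Type*} [NormedAddCommGroup H] [InnerProductSpace ℂ H] [CompleteSpace H]

local notation "ℓ²" => lp (fun _ : ℕ => ℂ) 2

def shiftFun (c : ℕ → ℂ) (g : ℕ → ℂ) : ℕ → ℂ
  | 0 => 0
  | n + 1 => c n * g n

lemma rpow_two_eq (x : ℝ) : x ^ (2:ℝ) = x ^ 2 := by
  rw [show (2:ℝ) = ((2:ℕ):ℝ) by norm_num, Real.rpow_natCast]

lemma summable_sq (g : ℓ²) : Summable (fun n => ‖g n‖ ^ (2:ℝ)) := by
  have h := lp.memℓp g
  rw [memℓp_gen_iff (by norm_num : (0:ℝ) < (2:ℝ≥0∞).toReal)] at h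
  simpa using h

lemma summable_shiftFun {c : ℕ → ℂ} {C : ℝ} (hC : ∀ n, ‖c n‖ ≤ C) (g : ℓ²) :
    Summable (fun n => ‖shiftFun c (⇑g) n‖ ^ (2:ℝ)) := by
  rw [← summable_nat_add_iff 1]
  have h2 : Summable (fun n => C ^ (2:ℝ) * ‖g n‖ ^ (2:ℝ)) := (summable_sq g).mul_left _
  refine h2.of_nonneg_of_le (fun n => Real.rpow_nonneg (norm_nonneg _) _) (fun n => ?_)
  show ‖c n * g n‖ ^ (2:ℝ) ≤ _
  rw [norm_mul, ← Real.mul_rpow (le_trans (norm_nonneg _) (hC n)) (norm_nonneg _)]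
  exact Real.rpow_le_rpow (by positivity)
    (mul_le_mul_of_nonneg_right (hC n) (norm_nonneg _)) (by norm_num)

lemma memℓp_shiftFun {c : ℕ → ℂ} {C : ℝ} (hC : ∀ n, ‖c n‖ ≤ C) (g : ℓ²) :
    Memℓp (shiftFun c g) 2 := by
  apply memℓp_gen
  have := summable_shiftFun hC g
  simpa using this

lemma tsum_shiftFun {c : ℕ → ℂ} {C : ℝ} (hC : ∀ n, ‖c n‖ ≤ C) (g : ℓ²) :
    ∑' n, ‖shiftFun c (⇑g) n‖ ^ (2:ℝ) = ∑' n, ‖c n * g n‖ ^ (2:ℝ) := by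
  rw [Summable.tsum_eq_zero_add (summable_shiftFun hC g)]
  simp [shiftFun, Real.zero_rpow]

def shiftL (c : ℕ → ℂ) (hb : ∃ C, ∀ n, ‖c n‖ ≤ C) : ℓ² →ₗ[ℂ] ℓ² where
  toFun g := ⟨shiftFun c g, memℓp_shiftFun hb.choose_spec g⟩
  map_add' g h := by
    apply lp.ext
    funext n
    cases n <;> simp [shiftFun, lp.coeFn_add, Pi.add_apply, mul_add] <;> erw [Pi.add_apply] <;> simp [shiftFun]
  map_smul' a g := by
    apply lp.ext
    funext n
    cases n <;> simp [shiftFun, lp.coeFn_smul, mul_comm, mul_left_comm]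

lemma shiftL_apply (c : ℕ → ℂ) (hb : ∃ C, ∀ n, ‖c n‖ ≤ C) (g : ℓ²) (n : ℕ) :
    (shiftL c hb g : ℕ → ℂ) n = shiftFun c (⇑g) n := rfl

lemma h2pos : (0:ℝ) < (2:ℝ≥0∞).toReal := by norm_num

lemma norm_shiftL_le (c : ℕ → ℂ) (hb : ∃ C, ∀ n, ‖c n‖ ≤ C) {C : ℝ} (hC0 : 0 ≤ C)
    (hC : ∀ n, ‖c n‖ ≤ C) (g : ℓ²) : ‖shiftL c hb g‖ ≤ C * ‖g‖ := by
  apply lp.norm_le_of_tsum_le h2pos (by positivity)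
  have key : ∑' n, ‖(shiftL c hb g : ℕ → ℂ) n‖ ^ ((2:ℝ≥0∞)).toReal
      = ∑' n, ‖c n * g n‖ ^ (2:ℝ) := by
    simp only [shiftL_apply]
    simpa using tsum_shiftFun hC g
  rw [key]
  have hle : ∑' n, ‖c n * g n‖ ^ (2:ℝ) ≤ ∑' n, C ^ (2:ℝ) * ‖g n‖ ^ (2:ℝ) := by
    refine Summable.tsum_le_tsum (fun n => ?_) ?_ ((summable_sq g).mul_left _)
    · rw [norm_mul, ← Real.mul_rpow (le_trans (norm_nonneg _) (hC n)) (norm_nonneg _)]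
      exact Real.rpow_le_rpow (by positivity)
        (mul_le_mul_of_nonneg_right (hC n) (norm_nonneg _)) (by norm_num)
    · have := summable_shiftFun hC g
      have h1 : Summable (fun n => ‖shiftFun c (⇑g) (n+1)‖ ^ (2:ℝ)) :=
        (summable_nat_add_iff 1).2 this
      simpa [shiftFun] using h1
  calc ∑' n, ‖c n * g n‖ ^ (2:ℝ) ≤ ∑' n, C ^ (2:ℝ) * ‖g n‖ ^ (2:ℝ) := hle
    _ = C ^ (2:ℝ) * ∑' n, ‖g n‖ ^ (2:ℝ) := by rw [tsum_mul_left]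
    _ = (C * ‖g‖) ^ ((2:ℝ≥0∞)).toReal := by
        have hn : ∑' n, ‖g n‖ ^ ((2:ℝ≥0∞)).toReal = ‖g‖ ^ ((2:ℝ≥0∞)).toReal :=
          (lp.norm_rpow_eq_tsum h2pos g).symm
        simp only [show ((2:ℝ≥0∞)).toReal = (2:ℝ) by norm_num] at hn ⊢
        rw [hn, Real.mul_rpow hC0 (norm_nonneg _)]

lemma norm_shiftL_eq (c : ℕ → ℂ) (hb : ∃ C, ∀ n, ‖c n‖ ≤ C) (hC : ∀ n, ‖c n‖ = 1) (g : ℓ²) :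
    ‖shiftL c hb g‖ = ‖g‖ := by
  have key : ∑' n, ‖(shiftL c hb g : ℕ → ℂ) n‖ ^ (2:ℝ) = ∑' n, ‖g n‖ ^ (2:ℝ) := by
    simp only [shiftL_apply]
    rw [tsum_shiftFun (C := 1) (fun n => (hC n).le) g]
    congr 1; funext n; rw [norm_mul, hC n, one_mul]
  have h1 : ‖shiftL c hb g‖ ^ (2:ℝ) = ‖g‖ ^ (2:ℝ) := by
    have ha := lp.norm_rpow_eq_tsum h2pos (shiftL c hb g)
    have hb' := lp.norm_rpow_eq_tsum h2pos g
    simp only [show ((2:ℝ≥0∞)).toReal = (2:ℝ) by norm_num] at ha hb'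
    rw [ha, hb', key]
  have := congrArg Real.sqrt h1
  rwa [rpow_two_eq, rpow_two_eq, Real.sqrt_sq (norm_nonneg _),
    Real.sqrt_sq (norm_nonneg _)] at this

lemma shiftL_single (c : ℕ → ℂ) (hb : ∃ C, ∀ n, ‖c n‖ ≤ C) (n : ℕ) :
    shiftL c hb (lp.single 2 n (1:ℂ)) = c n • lp.single 2 (n+1) (1:ℂ) := by
  apply lp.ext
  funext m
  rw [shiftL_apply]
  rcases m with _ | m
  · simp [shiftFun, lp.coeFn_smul, lp.single_apply]
  · simp only [shiftFun, lp.coeFn_smul, Pi.smul_apply, lp.single_apply, smul_eq_mul]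
    rcases eq_or_ne m n with rfl | h
    · simp
    · simp [h, fun hh => h (Nat.succ_injective hh)]

lemma exists_shiftCLM (e : HilbertBasis ℕ ℂ H) (c : ℕ → ℂ) (hb : ∃ C, ∀ n, ‖c n‖ ≤ C) :
    ∃ T : H →L[ℂ] H, (∀ n, T (e n) = c n • e (n + 1)) ∧
      (∀ C : ℝ, 0 ≤ C → (∀ n, ‖c n‖ ≤ C) → ∀ x, ‖T x‖ ≤ C * ‖x‖) ∧
      ((∀ n, ‖c n‖ = 1) → ∀ x, ‖T x‖ = ‖x‖) := by
  obtain ⟨C₀, hC₀⟩ := hb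
  have hb' : ∃ C, ∀ n, ‖c n‖ ≤ C := ⟨C₀, hC₀⟩
  have hC₀0 : 0 ≤ C₀ := le_trans (norm_nonneg _) (hC₀ 0)
  let Tlin : H →ₗ[ℂ] H :=
    (e.repr.symm.toLinearEquiv.toLinearMap).comp
      ((shiftL c hb').comp e.repr.toLinearEquiv.toLinearMap)
  have hTlin : ∀ x, Tlin x = e.repr.symm (shiftL c hb' (e.repr x)) := fun x => rfl
  have hnorm : ∀ x, ‖Tlin x‖ = ‖shiftL c hb' (e.repr x)‖ := by
    intro x; rw [hTlin]; exact e.repr.symm.norm_map _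
  let T : H →L[ℂ] H := Tlin.mkContinuous C₀ (fun x => by
    rw [hnorm]
    calc ‖shiftL c hb' (e.repr x)‖ ≤ C₀ * ‖e.repr x‖ :=
          norm_shiftL_le c hb' hC₀0 hC₀ _
      _ = C₀ * ‖x‖ := by rw [e.repr.norm_map])
  have hT : ∀ x, T x = Tlin x := fun x => rfl
  refine ⟨T, fun n => ?_, fun C hC0 hC x => ?_, fun hC x => ?_⟩
  · rw [hT, hTlin, e.repr_self, shiftL_single, map_smul, e.repr_symm_single]
  · rw [hT, hnorm]
    calc ‖shiftL c hb' (e.repr x)‖ ≤ C * ‖e.repr x‖ := norm_shiftL_le c hb' hC0 hC _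
      _ = C * ‖x‖ := by rw [e.repr.norm_map]
  · rw [hT, hnorm, norm_shiftL_eq c hb' hC, e.repr.norm_map]

lemma isCompactOperator_smulRight (φ : H →L[ℂ] ℂ) (v : H) :
    IsCompactOperator ⇑(φ.smulRight v) := by
  refine ⟨(fun a : ℂ => a • v) '' Metric.closedBall 0 (‖φ‖ + 1),
    ((isCompact_closedBall 0 _).image (continuous_id.smul continuous_const)), ?_⟩
  refine Filter.mem_of_superset (Metric.closedBall_mem_nhds 0 one_pos) (fun x hx => ?_)
  refine ⟨φ x, ?_, rfl⟩
  rw [Metric.mem_closedBall, dist_zero_right]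
  calc ‖φ x‖ ≤ ‖φ‖ * ‖x‖ := φ.le_opNorm x
    _ ≤ ‖φ‖ * 1 := by
        have := Metric.mem_closedBall.1 hx; rw [dist_zero_right] at this
        exact mul_le_mul_of_nonneg_left this (norm_nonneg _)
    _ ≤ ‖φ‖ + 1 := by linarith [norm_nonneg φ]

lemma isCompactOperator_sum {s : Finset ℕ} (f : ℕ → H →L[ℂ] H)
    (hf : ∀ i, IsCompactOperator ⇑(f i)) : IsCompactOperator ⇑(∑ i ∈ s, f i) := by
  classical
  induction s using Finset.induction with
  | empty => simpa using isCompactOperator_zero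
  | @insert a s h ih =>
    rw [Finset.sum_insert h]
    have hcoe : (⇑(f a + ∑ i ∈ s, f i)) = ⇑(f a) + ⇑(∑ i ∈ s, f i) := by
      funext x; simp
    rw [hcoe]
    exact IsCompactOperator.add (hf _) ih

lemma clm_ext_basis (e : HilbertBasis ℕ ℂ H) {A B : H →L[ℂ] H}
    (h : ∀ n, A (e n) = B (e n)) : A = B := by
  refine ContinuousLinearMap.ext_on
    (Submodule.dense_iff_topologicalClosure_eq_top.2 e.dense_span) ?_
  rintro x ⟨n, rfl⟩
  exact h n

theorem backward (e : HilbertBasis ℕ ℂ H) (w : ℕ → ℂ) (hw0 : ∀ n, w n ≠ 0)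
    (hwb : ∃ C : ℝ, ∀ n, ‖w n‖ ≤ C)
    (Sw : H →L[ℂ] H) (hSw : ∀ n, Sw (e n) = w n • e (n + 1))
    (htend : Tendsto (fun n => ‖w n‖) atTop (nhds 1)) :
    ∃ S K : H →L[ℂ] H, (∀ x, ‖S x‖ = ‖x‖) ∧ IsCompactOperator ⇑K ∧ Sw = S + K := by
  classical
  obtain ⟨Cw, hCw⟩ := hwb
  set c : ℕ → ℂ := fun n => (‖w n‖ : ℂ)⁻¹ * w n with hc_def
  have hrpos : ∀ n, (0:ℝ) < ‖w n‖ := fun n => norm_pos_iff.2 (hw0 n)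
  have hc1 : ∀ n, ‖c n‖ = 1 := by
    intro n
    show ‖(‖w n‖ : ℂ)⁻¹ * w n‖ = 1
    rw [norm_mul, norm_inv, Complex.norm_real, norm_norm, inv_mul_cancel₀ (hrpos n).ne']
  obtain ⟨S, hSe, _, hSiso⟩ := exists_shiftCLM e c ⟨1, fun n => (hc1 n).le⟩
  set d : ℕ → ℂ := fun n => w n - c n with hd_def
  have hd : ∀ n, ‖d n‖ = |‖w n‖ - 1| := by
    intro n
    have hne : ((‖w n‖ : ℂ)) ≠ 0 := by
      exact_mod_cast (hrpos n).ne'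
    have h1 : d n = ((‖w n‖ - 1 : ℝ) : ℂ) * ((‖w n‖ : ℂ)⁻¹ * w n) := by
      have hcancel : ((‖w n‖:ℂ) - 1) * ((‖w n‖:ℂ))⁻¹ = 1 - ((‖w n‖:ℂ))⁻¹ := by
        rw [sub_mul, mul_inv_cancel₀ hne, one_mul]
      simp only [hd_def, hc_def]
      push_cast
      rw [← mul_assoc, hcancel, sub_mul, one_mul]
    rw [h1, norm_mul, Complex.norm_real]
    have h2 : ‖(‖w n‖ : ℂ)⁻¹ * w n‖ = 1 := hc1 n
    rw [h2, mul_one, Real.norm_eq_abs]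
  have hdb : ∃ C, ∀ n, ‖d n‖ ≤ C := by
    refine ⟨Cw + 1, fun n => ?_⟩
    rw [hd_def]
    calc ‖w n - c n‖ ≤ ‖w n‖ + ‖c n‖ := norm_sub_le _ _
      _ ≤ Cw + 1 := by rw [hc1 n]; exact add_le_add_left (hCw n) 1
  have hd0 : Tendsto (fun n => ‖d n‖) atTop (nhds 0) := by
    have h1 : Tendsto (fun n => ‖w n‖ - 1) atTop (nhds 0) := by
      simpa using htend.sub_const 1
    have h2 := h1.abs
    simp only [abs_zero] at h2
    simpa only [hd] using h2
  set K : H →L[ℂ] H := Sw - S with hK_def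
  have hKe : ∀ n, K (e n) = d n • e (n + 1) := by
    intro n
    rw [hK_def]
    simp only [ContinuousLinearMap.sub_apply, hSw, hSe, hd_def, sub_smul]
  refine ⟨S, K, hSiso hc1, ?_, by rw [hK_def]; abel⟩
  set G : ℕ → (H →L[ℂ] H) := fun N =>
    ∑ k ∈ Finset.range N, ((innerSL ℂ (e k)).smulRight (d k • e (k + 1))) with hG_def
  have hinner : ∀ k m : ℕ, (⟪e k, e m⟫_ℂ) = if k = m then 1 else 0 :=
    orthonormal_iff_ite.1 e.orthonormal
  have hG_apply : ∀ N m, (G N) (e m) = (if m < N then d m else 0) • e (m + 1) := by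
    intro N m
    have hterm : ∀ k, ((innerSL ℂ (e k)).smulRight (d k • e (k + 1))) (e m)
        = if k = m then d m • e (m + 1) else 0 := by
      intro k
      rw [ContinuousLinearMap.smulRight_apply, innerSL_apply_apply, hinner]
      rcases eq_or_ne k m with rfl | h
      · simp
      · simp [h]
    rw [hG_def, ContinuousLinearMap.sum_apply,
      Finset.sum_congr rfl (fun k _ => hterm k),
      Finset.sum_ite_eq' (Finset.range N) m (fun _ => d m • e (m + 1))]
    by_cases h : m < N <;> simp [h, Finset.mem_range]
  have hG_compact : ∀ N, IsCompactOperator ⇑(G N) := by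
    intro N
    exact isCompactOperator_sum _ (fun i => isCompactOperator_smulRight _ _)
  have htendG : Tendsto G atTop (nhds K) := by
    rw [Metric.tendsto_atTop]
    intro ε hε
    obtain ⟨N₀, hN₀⟩ := (Metric.tendsto_atTop.1 hd0) (ε/2) (by linarith)
    refine ⟨N₀, fun N hN => ?_⟩
    set dN : ℕ → ℂ := fun n => if n < N then 0 else d n with hdN_def
    have hdNb : ∃ C, ∀ n, ‖dN n‖ ≤ C := by
      obtain ⟨C, hC⟩ := hdb
      refine ⟨max C 0, fun n => ?_⟩
      by_cases h : n < N
      · simp [hdN_def, h]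
      · simp only [hdN_def, h, if_false]
        exact le_max_of_le_left (hC n)
    obtain ⟨T, hTe, hTb, _⟩ := exists_shiftCLM e dN hdNb
    have hKG : K = G N + T := by
      apply clm_ext_basis e
      intro m
      rw [hKe m, ContinuousLinearMap.add_apply, hG_apply, hTe, hdN_def]
      by_cases h : m < N <;> simp [h]
    have hTnorm : ‖T‖ ≤ ε / 2 := by
      refine ContinuousLinearMap.opNorm_le_bound T (by linarith) (hTb (ε/2) (by linarith) ?_)
      intro n
      by_cases h : n < N
      · simp only [hdN_def, h, if_true, norm_zero]
        linarith
      · have h2 := hN₀ n (le_trans hN (not_lt.1 h))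
        rw [Real.dist_eq, sub_zero, abs_of_nonneg (norm_nonneg _)] at h2
        simpa [hdN_def, h] using h2.le
    have hdist : dist (G N) K = ‖T‖ := by
      rw [dist_eq_norm, hKG]
      have hGt : G N - (G N + T) = -T := by abel
      rw [hGt, norm_neg]
    rw [hdist]
    linarith
  exact isCompactOperator_of_tendsto htendG (Eventually.of_forall hG_compact)

theorem forward (e : HilbertBasis ℕ ℂ H) (w : ℕ → ℂ)
    (Sw : H →L[ℂ] H) (hSw : ∀ n, Sw (e n) = w n • e (n + 1))
    (S K : H →L[ℂ] H) (hS : ∀ x, ‖S x‖ = ‖x‖) (hK : IsCompactOperator ⇑K)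
    (heq : Sw = S + K) : Tendsto (fun n => ‖w n‖) atTop (nhds 1) := by
  have he1 : ∀ n : ℕ, ‖(e n : H)‖ = 1 := fun n => e.orthonormal.1 n
  have hweak : ∀ z : H, Tendsto (fun n => (⟪z, K (e n)⟫_ℂ)) atTop (nhds 0) := by
    intro z
    set f := e.repr ((ContinuousLinearMap.adjoint K) z) with hf_def
    have hform : ∀ n : ℕ, ⟪z, K (e n)⟫_ℂ = (starRingEnd ℂ) (f n) := by
      intro n
      rw [← ContinuousLinearMap.adjoint_inner_left K (e n) z, hf_def,
        e.repr_apply_apply, inner_conj_symm]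
    have hsum : Summable (fun n => ‖f n‖ ^ (2:ℝ)) := summable_sq f
    have h0 : Tendsto (fun n => ‖f n‖ ^ (2:ℝ)) atTop (nhds 0) := hsum.tendsto_atTop_zero
    have h1 : Tendsto (fun n => ‖f n‖) atTop (nhds 0) := by
      have h2 := (Real.continuous_sqrt.tendsto 0).comp h0
      rw [Real.sqrt_zero] at h2
      refine h2.congr (fun n => ?_)
      simp only [Function.comp_apply]
      rw [rpow_two_eq, Real.sqrt_sq (norm_nonneg _)]
    rw [show (fun n => (⟪z, K (e n)⟫_ℂ)) = fun n => (starRingEnd ℂ) (f n) from funext hform]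
    rw [tendsto_zero_iff_norm_tendsto_zero]
    simpa using h1
  have hstrong : Tendsto (fun n => K (e n)) atTop (nhds 0) := by
    apply tendsto_of_subseq_tendsto
    intro ns hns
    obtain ⟨M, hMc, hMV⟩ := hK
    obtain ⟨r, hr, hball⟩ := Metric.mem_nhds_iff.1 hMV
    have hmem : ∀ k : ℕ, K ((r/2 : ℝ) • e (ns k)) ∈ M := by
      intro k
      apply hball
      rw [Metric.mem_ball, dist_zero_right, norm_smul, he1, mul_one, Real.norm_eq_abs,
        abs_of_pos (by linarith)]
      linarith
    obtain ⟨y, hyM, φ, hφ, hconv⟩ := hMc.tendsto_subseq hmem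
    refine ⟨φ, ?_⟩
    have hscale : ∀ k, K (e (ns (φ k))) = (2/r : ℝ) • K ((r/2 : ℝ) • e (ns (φ k))) := by
      intro k
      rw [ContinuousLinearMap.map_smul_of_tower, smul_smul]
      rw [show (2/r : ℝ) * (r/2) = 1 by field_simp]
      rw [one_smul]
    have hconv2 : Tendsto (fun k => K (e (ns (φ k)))) atTop (nhds ((2/r : ℝ) • y)) :=
      (hconv.const_smul (2/r : ℝ)).congr (fun k => (hscale k).symm)
    have hy0 : ((2/r : ℝ) • y) = 0 := by
      have hz : ∀ z : H, ⟪z, (2/r:ℝ) • y⟫_ℂ = 0 := by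
        intro z
        have ha : Tendsto (fun k => ⟪z, K (e (ns (φ k)))⟫_ℂ) atTop
            (nhds (⟪z, (2/r:ℝ) • y⟫_ℂ)) := tendsto_const_nhds.inner hconv2
        have hsub : Tendsto (fun k => ns (φ k)) atTop atTop := hns.comp hφ.tendsto_atTop
        have hb := (hweak z).comp hsub
        exact tendsto_nhds_unique ha hb
      have := hz ((2/r:ℝ) • y)
      rwa [inner_self_eq_zero] at this
    rw [hy0] at hconv2
    exact hconv2
  have hK0 : Tendsto (fun n => ‖K (e n)‖) atTop (nhds 0) := by
    simpa using hstrong.norm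
  have hsub : Tendsto (fun n => ‖w n‖ - 1) atTop (nhds 0) := by
    refine squeeze_zero_norm (fun n => ?_) hK0
    have h1 : ‖w n‖ = ‖Sw (e n)‖ := by rw [hSw n, norm_smul, he1, mul_one]
    have h2 : (1:ℝ) = ‖S (e n)‖ := by rw [hS, he1]
    calc ‖‖w n‖ - 1‖ = |‖Sw (e n)‖ - ‖S (e n)‖| := by rw [Real.norm_eq_abs, h1, ← h2]
      _ ≤ ‖Sw (e n) - S (e n)‖ := abs_norm_sub_norm_le _ _
      _ = ‖K (e n)‖ := by rw [heq]; simp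
  have hfin := hsub.add (tendsto_const_nhds (x := (1:ℝ)) (f := atTop))
  simpa using hfin

end WSA

end

/-- A weighted shift `S_w` with nonzero bounded weights is compact + isometry
iff `|w_n| → 1`. -/
theorem weightedShift_compact_add_isometry_iff
    (H : Type*) [NormedAddCommGroup H] [InnerProductSpace ℂ H] [CompleteSpace H]
    (e : HilbertBasis ℕ ℂ H) (w : ℕ → ℂ) (hw0 : ∀ n, w n ≠ 0)
    (hwb : ∃ C : ℝ, ∀ n, ‖w n‖ ≤ C)
    (Sw : H →L[ℂ] H) (hSw : ∀ n, Sw (e n) = w n • e (n + 1)) :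
    (∃ S K : H →L[ℂ] H, (∀ x, ‖S x‖ = ‖x‖) ∧ IsCompactOperator ⇑K ∧ Sw = S + K) ↔
      Tendsto (fun n => ‖w n‖) atTop (nhds 1) := by
  constructor
  · rintro ⟨S, K, hS, hK, heq⟩
    exact WSA.forward e w Sw hSw S K hS hK heq
  · intro h
    exact WSA.backward e w hw0 hwb Sw hSw h
end

section
/- Let H be a complex Hilbert space and T a bounded linear operator on H that is left-invertible and whose adjoint has finite-dimensional kernel, and set L_T = (T*T)^{-1} T*. Then the following four statements are equivalent: (1) T = S + K for some isometry S on H and some compact operator K on H; (2) I - T*T is a compact operator; (3) L_T - T* is a compact operator; (4) I - T T* is a compact operator. -/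
open ContinuousLinearMap

set_option synthInstance.maxHeartbeats 1000000
set_option maxHeartbeats 1000000
set_option linter.unusedSectionVars false

section Helpers
variable {H : Type*} [NormedAddCommGroup H] [InnerProductSpace ℂ H] [CompleteSpace H]

private lemma cptL {f : H →L[ℂ] H} (g : H →L[ℂ] H) (hf : IsCompactOperator ⇑f) :
    IsCompactOperator ⇑(g * f) := hf.clm_comp g

private lemma cptR {f : H →L[ℂ] H} (g : H →L[ℂ] H) (hf : IsCompactOperator ⇑f) :
    IsCompactOperator ⇑(f * g) := hf.comp_clm g

private lemma cptAdd {f g : H →L[ℂ] H} (hf : IsCompactOperator ⇑f) (hg : IsCompactOperator ⇑g) :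
    IsCompactOperator ⇑(f + g) := hf.add hg

private lemma cptNeg {f : H →L[ℂ] H} (hf : IsCompactOperator ⇑f) :
    IsCompactOperator ⇑(-f) := hf.neg

/-- a finite-rank continuous operator is compact -/
private lemma cptFinRank (f : H →L[ℂ] H) (W : Submodule ℂ H) [FiniteDimensional ℂ W]
    (h : ∀ x, f x ∈ W) : IsCompactOperator ⇑f := by
  rw [isCompactOperator_iff_exists_mem_nhds_image_subset_compact]
  refine ⟨Metric.ball 0 1, Metric.ball_mem_nhds 0 one_pos,
    Subtype.val '' Metric.closedBall (0 : W) ‖f‖,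
    (isCompact_closedBall _ _).image continuous_subtype_val, ?_⟩
  rintro y ⟨x, hx, rfl⟩
  refine ⟨⟨f x, h x⟩, ?_, rfl⟩
  rw [Metric.mem_closedBall, dist_zero_right]
  calc ‖(⟨f x, h x⟩ : W)‖ = ‖f x‖ := rfl
  _ ≤ ‖f‖ * ‖x‖ := f.le_opNorm x
  _ ≤ ‖f‖ * 1 := by
      gcongr
      exact le_of_lt (by simpa using hx)
  _ = ‖f‖ := mul_one _

/-- Schauder: the adjoint of a compact operator on a Hilbert space is compact. -/
private lemma cptAdjoint {K : H →L[ℂ] H} (hK : IsCompactOperator ⇑K) :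
    IsCompactOperator ⇑(adjoint K) := by
  classical
  set g : H →L[ℂ] H := K * adjoint K with hg
  have hgc : IsCompactOperator ⇑g := cptR _ hK
  set B : Set H := Metric.closedBall (0 : H) 1 with hBdef
  have hTBg : TotallyBounded (⇑g '' B) := by
    obtain ⟨C, hCc, hCsub⟩ := hgc.image_subset_compact_of_bounded (𝕜₁ := ℂ) (𝕜₂ := ℂ)
      (f := (g : H →ₗ[ℂ] H)) Metric.isBounded_closedBall
    exact hCc.totallyBounded.subset hCsub
  have hTB : TotallyBounded (⇑(adjoint K) '' B) := by
    rw [Metric.totallyBounded_iff]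
    intro ε hε
    obtain ⟨t, hts, htf, hcover⟩ := hTBg.exists_subset
      (Metric.dist_mem_uniformity (show (0:ℝ) < ε ^ 2 / 4 by positivity))
    choose! φ hφB hφg using fun c (hc : c ∈ t) => hts hc
    refine ⟨(fun c => adjoint K (φ c)) '' t, htf.image _, ?_⟩
    rintro y ⟨x, hx, rfl⟩
    have hxcov : g x ∈ ⋃ c ∈ t, {z | (z, c) ∈ {p : H × H | dist p.1 p.2 < ε ^ 2 / 4}} :=
      hcover ⟨x, hx, rfl⟩
    simp only [Set.mem_iUnion, Set.mem_setOf_eq, exists_prop] at hxcov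
    obtain ⟨c, hct, hdist⟩ := hxcov
    refine Set.mem_iUnion₂.mpr ⟨adjoint K (φ c), ⟨c, hct, rfl⟩, ?_⟩
    rw [Metric.mem_ball, dist_eq_norm, ← map_sub]
    set z := x - φ c with hz
    have hnz : ‖z‖ ≤ 2 := by
      have h1 : ‖x‖ ≤ 1 := by simpa [hBdef, dist_zero_right] using hx
      have h2 : ‖φ c‖ ≤ 1 := by simpa [hBdef, dist_zero_right] using hφB c hct
      calc ‖z‖ ≤ ‖x‖ + ‖φ c‖ := norm_sub_le _ _
      _ ≤ 2 := by linarith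
    have hsq : ‖adjoint K z‖ ^ 2 = RCLike.re (inner (𝕜 := ℂ) z (g z)) := by
      rw [← inner_self_eq_norm_sq (𝕜 := ℂ)]
      congr 1
      rw [adjoint_inner_left]
      rfl
    have hgz : ‖g z‖ < ε ^ 2 / 4 := by
      have : g z = g x - g (φ c) := by rw [hz, map_sub]
      rw [this, ← dist_eq_norm]
      calc dist (g x) (g (φ c)) = dist (g x) c := by rw [hφg c hct]
      _ < ε ^ 2 / 4 := hdist
    have hb : ‖adjoint K z‖ ^ 2 < ε ^ 2 := by
      calc ‖adjoint K z‖ ^ 2 = RCLike.re (inner (𝕜 := ℂ) z (g z)) := hsq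
      _ ≤ ‖inner (𝕜 := ℂ) z (g z)‖ := RCLike.re_le_norm _
      _ ≤ ‖z‖ * ‖g z‖ := norm_inner_le_norm _ _
      _ ≤ 2 * ‖g z‖ := by gcongr
      _ < 2 * (ε ^ 2 / 4) := by gcongr
      _ < ε ^ 2 := by nlinarith
    exact lt_of_pow_lt_pow_left₀ 2 hε.le hb
  rw [isCompactOperator_iff_exists_mem_nhds_isCompact_closure_image]
  refine ⟨B, Metric.closedBall_mem_nhds 0 one_pos, ?_⟩
  exact TotallyBounded.isCompact_of_isClosed hTB.closure isClosed_closure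

end Helpers

/-- For a left-invertible operator `T` with `dim ker T* < ∞` the following are
equivalent: (1) `T` = isometry + compact; (2) `I - T*T` compact;
(3) `L_T - T*` compact, where `L_T = (T*T)⁻¹ T*`; (4) `I - T T*` compact. -/
theorem leftInvertible_compact_add_isometry_tfae
    (H : Type*) [NormedAddCommGroup H] [InnerProductSpace ℂ H] [CompleteSpace H]
    (T : H →L[ℂ] H) (hT : ∃ V : H →L[ℂ] H, V * T = 1)
    (hker : FiniteDimensional ℂ (LinearMap.ker (adjoint T : H →ₗ[ℂ] H))) :
    List.TFAE
      [ ∃ S K : H →L[ℂ] H, (∀ x, ‖S x‖ = ‖x‖) ∧ IsCompactOperator ⇑K ∧ T = S + K,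
        IsCompactOperator ⇑(1 - adjoint T * T),
        IsCompactOperator ⇑(Ring.inverse (adjoint T * T) * adjoint T - adjoint T),
        IsCompactOperator ⇑(1 - T * adjoint T) ] := by
  classical
  obtain ⟨V, hV⟩ := hT
  set A : H →L[ℂ] H := adjoint T * T with hA
  have hA_pos : A.IsPositive := by
    have := isPositive_one.adjoint_conj T
    simpa [hA, mul_def, one_def] using this
  have hA_nonneg : 0 ≤ A := (nonneg_iff_isPositive A).mpr hA_pos
  have hA_sa : IsSelfAdjoint A := hA_pos.isSelfAdjoint
  have hlow : ∀ x : H, ‖x‖ ≤ (‖V‖ + 1) * ‖T x‖ := by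
    intro x
    have hx : x = V (T x) := by
      have := congrArg (fun f : H →L[ℂ] H => f x) hV
      simpa [mul_apply] using this.symm
    calc ‖x‖ = ‖V (T x)‖ := by rw [← hx]
    _ ≤ ‖V‖ * ‖T x‖ := V.le_opNorm _
    _ ≤ (‖V‖ + 1) * ‖T x‖ := by gcongr <;> linarith [norm_nonneg V]
  have hA_unit : IsUnit A := by
    have hc : (0 : NNReal) < ((‖V‖₊ + 1) ^ 2)⁻¹ := by positivity
    apply isUnit_of_forall_le_norm_inner_map A hc
    intro x
    have hTT : (inner (𝕜 := ℂ) (A x) x) = inner (𝕜 := ℂ) (T x) (T x) := by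
      rw [hA, mul_apply_eq_comp, adjoint_inner_left]
    rw [hTT, inner_self_eq_norm_sq_to_K, norm_pow, RCLike.norm_ofReal, abs_norm]
    have hcast : ((((‖V‖₊ + 1) ^ 2)⁻¹ : NNReal) : ℝ) = ((‖V‖ + 1) ^ 2)⁻¹ := by
      push_cast
      norm_num
    rw [hcast]
    rw [mul_inv_le_iff₀ (by positivity)]
    calc ‖x‖ ^ 2 ≤ ((‖V‖ + 1) * ‖T x‖) ^ 2 := by
          apply pow_le_pow_left₀ (norm_nonneg x) (hlow x)
    _ = ‖T x‖ ^ 2 * (‖V‖ + 1) ^ 2 := by ring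
  have hAiA : Ring.inverse A * A = 1 := Ring.inverse_mul_cancel A hA_unit
  have hAAi : A * Ring.inverse A = 1 := Ring.mul_inverse_cancel A hA_unit
  tfae_have 2 → 3
  | h2 => by
    have key : Ring.inverse A * adjoint T - adjoint T
        = Ring.inverse A * ((1 - A) * adjoint T) := by
      rw [sub_mul, one_mul, mul_sub, ← mul_assoc, hAiA, one_mul]
    rw [key]
    exact cptL _ (cptR _ h2)
  tfae_have 3 → 2
  | h3 => by
    have key : (1 : H →L[ℂ] H) - A
        = (Ring.inverse A * adjoint T - adjoint T) * T := by
      rw [sub_mul, mul_assoc, ← hA, hAiA]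
    rw [key]
    exact cptR _ h3
  tfae_have 2 → 4
  | h2 => by
    set P : H →L[ℂ] H := T * Ring.inverse A * adjoint T with hP
    have h1P : IsCompactOperator ⇑(1 - P) := by
      apply cptFinRank _ (LinearMap.ker (adjoint T : H →ₗ[ℂ] H))
      intro x
      rw [LinearMap.mem_ker]
      have hTP : adjoint T * (1 - P) = 0 := by
        have e1 : adjoint T * P = adjoint T := by
          have : adjoint T * (T * Ring.inverse A * adjoint T)
              = (adjoint T * T) * Ring.inverse A * adjoint T := by noncomm_ring
          rw [hP, this, ← hA, hAAi, one_mul]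
        rw [mul_sub, mul_one, e1, sub_self]
      calc adjoint T ((1 - P) x) = (adjoint T * (1 - P)) x := rfl
      _ = (0 : H →L[ℂ] H) x := by rw [hTP]
      _ = 0 := rfl
    have key : (1 : H →L[ℂ] H) - T * adjoint T
        = (1 - P) + T * (Ring.inverse A * ((1 - A) * adjoint T)) := by
      have e2 : Ring.inverse A * ((1 - A) * adjoint T)
          = Ring.inverse A * adjoint T - adjoint T := by
        rw [sub_mul, one_mul, mul_sub, ← mul_assoc, hAiA, one_mul]
      rw [e2, hP]
      noncomm_ring
    rw [key]
    exact cptAdd h1P (cptL _ (cptL _ (cptR _ h2)))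
  tfae_have 4 → 2
  | h4 => by
    have key : (1 : H →L[ℂ] H) - A
        = Ring.inverse A * (adjoint T * ((1 - T * adjoint T) * T)) := by
      have e1 : adjoint T * ((1 - T * adjoint T) * T) = A - A * A := by
        rw [hA]; noncomm_ring
      rw [e1, mul_sub, hAiA, ← mul_assoc, hAiA, one_mul]
    rw [key]
    exact cptL _ (cptL _ (cptR _ h4))
  tfae_have 1 → 2
  | ⟨S, K, hSiso, hKc, hTeq⟩ => by
    have hSS : adjoint S * S = 1 := by
      have := (norm_map_iff_adjoint_comp_self S).mp hSiso
      rwa [← mul_def] at this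
    have key : (1 : H →L[ℂ] H) - A
        = -(adjoint S * K + adjoint K * T) := by
      rw [hA, hTeq, map_add]
      simp only [add_mul, mul_add]
      rw [hSS]
      noncomm_ring
    rw [key]
    exact cptNeg (cptAdd (cptL _ hKc) (cptR _ (cptAdjoint hKc)))
  tfae_have 2 → 1
  | h2 => by
    set R : H →L[ℂ] H := CFC.sqrt A with hR
    have hRsq : R * R = A := by
      have := CFC.sq_sqrt (a := A) hA_nonneg
      rwa [sq] at this
    have hR_nonneg : (0 : H →L[ℂ] H) ≤ R := CFC.sqrt_nonneg _
    have hR_pos : R.IsPositive := (nonneg_iff_isPositive R).mp hR_nonneg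
    have hR_sa : IsSelfAdjoint R := hR_pos.isSelfAdjoint
    have hRA : R * A = A * R := by rw [← hRsq, mul_assoc]
    have hiR : Ring.inverse A * R = R * Ring.inverse A := by
      calc Ring.inverse A * R = Ring.inverse A * R * (A * Ring.inverse A) := by
            rw [hAAi, mul_one]
      _ = Ring.inverse A * (R * A) * Ring.inverse A := by noncomm_ring
      _ = Ring.inverse A * (A * R) * Ring.inverse A := by rw [hRA]
      _ = (Ring.inverse A * A) * (R * Ring.inverse A) := by noncomm_ring
      _ = R * Ring.inverse A := by rw [hAiA, one_mul]
    set B : H →L[ℂ] H := R * Ring.inverse A with hB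
    have hBR : B * R = 1 := by
      calc B * R = R * (Ring.inverse A * R) := by rw [hB, mul_assoc]
      _ = R * (R * Ring.inverse A) := by rw [hiR]
      _ = (R * R) * Ring.inverse A := by noncomm_ring
      _ = 1 := by rw [hRsq, hAAi]
    have hRB : R * B = 1 := by rw [hB, ← mul_assoc, hRsq, hAAi]
    have hB_sa : IsSelfAdjoint B := by
      rw [IsSelfAdjoint]
      calc star B = star B * (R * B) := by rw [hRB, mul_one]
      _ = (star B * R) * B := by rw [mul_assoc]
      _ = (star B * star R) * B := by rw [hR_sa.star_eq]
      _ = star (R * B) * B := by rw [← star_mul]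
      _ = B := by rw [hRB, star_one, one_mul]
    set S : H →L[ℂ] H := T * B with hS
    have hSadj : adjoint S = B * adjoint T := by
      rw [← star_eq_adjoint, hS, star_mul, hB_sa.star_eq, star_eq_adjoint]
    have hSS : adjoint S * S = 1 := by
      rw [hSadj, hS]
      calc B * adjoint T * (T * B) = B * A * B := by rw [hA]; noncomm_ring
      _ = R * B := by rw [hB, mul_assoc R, hAiA, mul_one]
      _ = 1 := hRB
    have hSiso : ∀ x, ‖S x‖ = ‖x‖ := by
      rw [norm_map_iff_adjoint_comp_self, ← mul_def]
      exact hSS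
    have h1R : IsCompactOperator ⇑(1 - R) := by
      have hu : IsUnit ((1 : H →L[ℂ] H) + R) := by
        apply isUnit_of_forall_le_norm_inner_map _ (c := 1) one_pos
        intro x
        have e1 : RCLike.re (inner (𝕜 := ℂ) (((1 : H →L[ℂ] H) + R) x) x)
            = ‖x‖ ^ 2 + RCLike.re (inner (𝕜 := ℂ) (R x) x) := by
          rw [add_apply, one_apply_eq_self, inner_add_left, map_add, inner_self_eq_norm_sq]
        calc ‖x‖ ^ 2 * ((1 : NNReal) : ℝ) = ‖x‖ ^ 2 := by norm_num
        _ ≤ RCLike.re (inner (𝕜 := ℂ) (((1 : H →L[ℂ] H) + R) x) x) := by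
            rw [e1]; linarith [hR_pos.re_inner_nonneg_left x]
        _ ≤ ‖inner (𝕜 := ℂ) (((1 : H →L[ℂ] H) + R) x) x‖ := RCLike.re_le_norm _
      have hfac : (1 : H →L[ℂ] H) - R = Ring.inverse (1 + R) * (1 - A) := by
        have hexp : ((1 : H →L[ℂ] H) + R) * (1 - R) = 1 - A := by
          rw [← hRsq]; noncomm_ring
        rw [← hexp, ← mul_assoc, Ring.inverse_mul_cancel _ hu, one_mul]
      rw [hfac]
      exact cptL _ h2
    have hKeq : T - S = T * (B * (R - 1)) := by
      have : T * (B * (R - 1)) = T * (B * R) - T * B := by noncomm_ring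
      rw [this, hBR, mul_one, hS]
    have hKc : IsCompactOperator ⇑(T - S) := by
      rw [hKeq]
      have hR1 : IsCompactOperator ⇑(R - 1) := by
        have : R - (1 : H →L[ℂ] H) = -(1 - R) := by noncomm_ring
        rw [this]
        exact cptNeg h1R
      exact cptL _ (cptL _ hR1)
    exact ⟨S, T - S, hSiso, hKc, by abel⟩
  tfae_finish
end

section
/- Let H be a complex Hilbert space and T a bounded linear operator on H that is left-invertible. If I - T*T is a compact operator, then T = S + K for some isometry S on H and some compact operator K on H. (The proof factors I - T*T = (I + |T|)(I - |T|), deduces |T| = I + compact, and uses the polar decomposition T = U|T|, where U is an isometry since T is injective with closed range.) -/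
open ContinuousLinearMap

/-- If `T` is left-invertible and `I - T*T` is compact, then `T` is a compact
perturbation of an isometry. -/
theorem compact_add_isometry_of_one_sub_adjoint_mul_self_isCompact
    (H : Type*) [NormedAddCommGroup H] [InnerProductSpace ℂ H] [CompleteSpace H]
    (T : H →L[ℂ] H) (hT : ∃ V : H →L[ℂ] H, V * T = 1)
    (h : IsCompactOperator ⇑(1 - adjoint T * T)) :
    ∃ S K : H →L[ℂ] H, (∀ x, ‖S x‖ = ‖x‖) ∧ IsCompactOperator ⇑K ∧ T = S + K := by
  classical
  obtain ⟨V, hV⟩ := hT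
  by_cases hH : Subsingleton H
  · refine ⟨T, 0, fun x => by rw [Subsingleton.elim (T x) x], ?_, by simp⟩
    simpa using (isCompactOperator_zero (M₁ := H) (M₂ := H))
  have : Nontrivial H := not_subsingleton_iff_nontrivial.mp hH
  set A : H →L[ℂ] H := adjoint T * T with hA_def
  have hA_nonneg : (0 : H →L[ℂ] H) ≤ A := by
    rw [hA_def, ← star_eq_adjoint]
    exact star_mul_self_nonneg T
  -- lower bound for T
  have hlow : ∀ x : H, ‖x‖ ≤ ‖V‖ * ‖T x‖ := by
    intro x
    calc ‖x‖ = ‖(V * T) x‖ := by rw [hV]; simp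
    _ = ‖V (T x)‖ := rfl
    _ ≤ ‖V‖ * ‖T x‖ := V.le_opNorm _
  have hVpos : 0 < ‖V‖ := by
    obtain ⟨x, hx⟩ := exists_ne (0 : H)
    have hx' : 0 < ‖x‖ := norm_pos_iff.mpr hx
    by_contra hc
    push_neg at hc
    have hV0 : ‖V‖ = 0 := le_antisymm hc (norm_nonneg V)
    have := hlow x
    rw [hV0, zero_mul] at this
    linarith
  have hA_unit : IsUnit A := by
    refine isUnit_of_forall_le_norm_inner_map A (c := (‖V‖₊ ^ 2)⁻¹) ?_ ?_
    · have : ‖V‖₊ ≠ 0 := by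
        simpa [← NNReal.coe_lt_coe] using hVpos
      positivity
    · intro x
      have h1 : inner ℂ (A x) x = (inner ℂ (T x) (T x) : ℂ) := by
        rw [hA_def, ContinuousLinearMap.mul_apply, adjoint_inner_left]
      have h2 : ‖(inner ℂ (A x) x : ℂ)‖ = ‖T x‖ ^ 2 := by
        rw [h1, @inner_self_eq_norm_sq_to_K ℂ]
        simp
      rw [h2]
      have hcast : ((((‖V‖₊ ^ 2)⁻¹ : NNReal)) : ℝ) = (‖V‖ ^ 2)⁻¹ := by
        push_cast
        rfl
      rw [hcast, ← div_eq_mul_inv, div_le_iff₀ (by positivity)]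
      have := hlow x
      nlinarith [norm_nonneg x, norm_nonneg (T x)]
  -- square root
  set B : H →L[ℂ] H := CFC.sqrt A with hB_def
  have hB_nonneg : (0 : H →L[ℂ] H) ≤ B := CFC.sqrt_nonneg A
  have hBB : B * B = A := CFC.sqrt_mul_sqrt_self A hA_nonneg
  have hB_sa : star B = B := (IsSelfAdjoint.of_nonneg hB_nonneg)
  -- B is a unit
  obtain ⟨u, hu⟩ := hA_unit
  have hcommAB : Commute A B := by
    rw [← hBB]; exact (Commute.refl B).mul_left (Commute.refl B)
  have hcommuB : Commute (↑u : H →L[ℂ] H) B := by rw [hu]; exact hcommAB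
  have hcommuinvB : Commute (↑u⁻¹ : H →L[ℂ] H) B := hcommuB.units_inv_left
  have hB_unit : IsUnit B := by
    refine ⟨⟨B, ↑u⁻¹ * B, ?_, ?_⟩, rfl⟩
    · calc B * (↑u⁻¹ * B) = B * (B * ↑u⁻¹) := by rw [hcommuinvB.eq]
      _ = (B * B) * ↑u⁻¹ := (mul_assoc _ _ _).symm
      _ = ↑u * ↑u⁻¹ := by rw [hBB, hu]
      _ = 1 := u.mul_inv
    · calc (↑u⁻¹ * B) * B = ↑u⁻¹ * (B * B) := mul_assoc _ _ _
      _ = ↑u⁻¹ * ↑u := by rw [hBB, hu]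
      _ = 1 := u.inv_mul
  set C : H →L[ℂ] H := Ring.inverse B with hC_def
  have hCB : C * B = 1 := Ring.inverse_mul_cancel B hB_unit
  have hBC : B * C = 1 := Ring.mul_inverse_cancel B hB_unit
  have hC_star : star C = C := by
    rw [hC_def, ← Ring.inverse_star, hB_sa]
  set S : H →L[ℂ] H := T * C with hS_def
  have hS : star S * S = 1 := by
    rw [hS_def, star_mul, hC_star, star_eq_adjoint,
      mul_assoc C (adjoint T) (T * C), ← mul_assoc (adjoint T) T C,
      show adjoint T * T = B * B from hBB.symm,
      mul_assoc B B C, hBC, mul_one, hCB]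
  have hiso : ∀ x, ‖S x‖ = ‖x‖ := by
    intro x
    have h1 : (inner ℂ (S x) (S x) : ℂ) = inner ℂ x x := by
      rw [← adjoint_inner_left, ← star_eq_adjoint,
        show star S (S x) = (star S * S) x from rfl, hS]
      rfl
    rw [@norm_eq_sqrt_re_inner ℂ, norm_eq_sqrt_re_inner (𝕜 := ℂ) x, h1]
  -- B + 1 is a unit
  have hB1_unit : IsUnit (B + 1) := by
    refine isUnit_of_forall_le_norm_inner_map (B + 1) (c := 1) one_pos ?_
    intro x
    have hpos := ((nonneg_iff_isPositive B).mp hB_nonneg).inner_nonneg_left x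
    calc ‖x‖ ^ 2 * (1 : NNReal) = ‖x‖ ^ 2 := by norm_num
    _ ≤ RCLike.re (inner ℂ (B x) x : ℂ) + RCLike.re (inner ℂ x x : ℂ) := by
        rw [@inner_self_eq_norm_sq ℂ]
        exact le_add_of_nonneg_left (RCLike.nonneg_iff.mp hpos).1
    _ = RCLike.re (inner ℂ ((B + 1) x) x : ℂ) := by
        simp [inner_add_left]
    _ ≤ ‖(inner ℂ ((B + 1) x) x : ℂ)‖ := RCLike.re_le_norm _
  set D : H →L[ℂ] H := Ring.inverse (B + 1) with hD_def
  have hD : D * (B + 1) = 1 := Ring.inverse_mul_cancel _ hB1_unit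
  have hfact : (B + 1) * (B - 1) = A - 1 := by
    rw [← hBB]; noncomm_ring
  have hB1 : B - 1 = D * (A - 1) := by
    calc B - 1 = (D * (B + 1)) * (B - 1) := by rw [hD, one_mul]
    _ = D * ((B + 1) * (B - 1)) := mul_assoc _ _ _
    _ = D * (A - 1) := by rw [hfact]
  have hA1 : IsCompactOperator ⇑(A - 1) := by
    have hAeq : A - 1 = -(1 - adjoint T * T) := by rw [hA_def, neg_sub]
    rw [hAeq]
    exact h.neg
  have hTS : T - S = S * (D * (A - 1)) := by
    rw [← hB1]
    calc T - S = T * (C * B) - S := by rw [hCB, mul_one]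
    _ = (T * C) * B - (T * C) * 1 := by rw [← mul_assoc, mul_one, hS_def]
    _ = S * (B - 1) := by rw [hS_def, mul_sub]
  have hK : IsCompactOperator ⇑(T - S) := by
    rw [hTS]
    have h1 : IsCompactOperator ⇑(D * (A - 1)) := by
      have := hA1.continuous_comp D.continuous
      simpa [Function.comp] using this
    have h2 := h1.continuous_comp S.continuous
    simpa [Function.comp] using h2
  exact ⟨S, T - S, hiso, hK, by abel⟩
end

section
/- Let H be a complex Hilbert space, D = {z ∈ ℂ : |z| < 1} the open unit disc, k : D → H a family of vectors whose linear span is dense in H, and M_z a bounded linear operator on H such that ⟨M_z f, k(w)⟩ = w · ⟨f, k(w)⟩ for all f ∈ H and all w ∈ D. Assume M_z is left-invertible and ker M_z* is finite-dimensional. Let C be a bounded linear operator on H satisfying ⟨C f, k(w)⟩ = ⟨f, k(w) - conj(w) · M_z(k(w))⟩ for all f ∈ H and w ∈ D. Then M_z = S + K for some isometry S on H and some compact operator K on H if and only if C is a compact operator. -/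
set_option maxHeartbeats 1000000
set_option synthInstance.maxHeartbeats 1000000
set_option linter.unusedSectionVars false

open ContinuousLinearMap Metric

section Helpers

variable {H : Type*} [NormedAddCommGroup H] [InnerProductSpace ℂ H] [CompleteSpace H]

lemma aux_finrank_compact (T : H →L[ℂ] H) (W : Submodule ℂ H) [FiniteDimensional ℂ W]
    (hr : ∀ x, T x ∈ W) : IsCompactOperator ⇑T := by
  haveI : ProperSpace W := FiniteDimensional.proper ℂ W
  refine (isCompactOperator_iff_image_closedBall_subset_compact
    (T : H →ₗ[ℂ] H) one_pos).mpr ?_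
  refine ⟨Subtype.val '' (closedBall (0 : W) ‖T‖), (isCompact_closedBall _ _).image
    continuous_subtype_val, ?_⟩
  rintro y ⟨x, hx, rfl⟩
  refine ⟨⟨T x, hr x⟩, ?_, rfl⟩
  rw [mem_closedBall_zero_iff] at hx ⊢
  calc ‖(⟨T x, hr x⟩ : W)‖ = ‖T x‖ := rfl
    _ ≤ ‖T‖ * ‖x‖ := T.le_opNorm x
    _ ≤ ‖T‖ * 1 := by gcongr
    _ = ‖T‖ := mul_one _

lemma aux_adjoint_compact (T : H →L[ℂ] H) (hT : IsCompactOperator ⇑T) :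
    IsCompactOperator ⇑(adjoint T) := by
  refine (isCompactOperator_iff_isCompact_closure_image_closedBall
    ((adjoint T) : H →ₗ[ℂ] H) one_pos).mpr ?_
  refine TotallyBounded.isCompact_of_isClosed (TotallyBounded.closure ?_) isClosed_closure
  rw [Metric.totallyBounded_iff]
  intro ε hε
  have hTT : IsCompactOperator ⇑(T * adjoint T) := by
    have := hT.comp_clm (adjoint T)
    exact this
  have tb : TotallyBounded ((T * adjoint T) '' closedBall 0 1) := by
    obtain ⟨Q, hQc, hQs⟩ :=
      (hTT : IsCompactOperator ⇑((T * adjoint T : H →L[ℂ] H) : H →ₗ[ℂ] H)).image_closedBall_subset_compact 1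
    exact (hQc.totallyBounded).subset hQs
  have hδ : (0:ℝ) < ε ^ 2 / 4 := by positivity
  obtain ⟨t, hts, htf, hcover⟩ := totallyBounded_iff_subset.mp tb _ (dist_mem_uniformity hδ)
  haveI := htf.to_subtype
  have hchoice : ∀ y : t, ∃ x, x ∈ closedBall (0:H) 1 ∧ (T * adjoint T) x = (y : H) := by
    rintro ⟨y, hy⟩
    obtain ⟨x, hx, hxy⟩ := hts hy
    exact ⟨x, hx, hxy⟩
  choose g hg1 hg2 using hchoice
  refine ⟨Set.range (fun y : t => adjoint T (g y)), Set.finite_range _, ?_⟩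
  rintro u ⟨x, hx, rfl⟩
  have hxTT : (T * adjoint T) x ∈ ⋃ y ∈ t, {z | (z, y) ∈ {p : H × H | dist p.1 p.2 < ε^2/4}} :=
    hcover ⟨x, hx, rfl⟩
  simp only [Set.mem_iUnion, Set.mem_setOf_eq] at hxTT
  obtain ⟨y, hyt, hdy⟩ := hxTT
  refine Set.mem_iUnion₂.mpr ⟨adjoint T (g ⟨y, hyt⟩), ⟨⟨y, hyt⟩, rfl⟩, ?_⟩
  rw [mem_ball, dist_eq_norm]
  set x' := g ⟨y, hyt⟩ with hx'
  have hkey : ‖adjoint T x - adjoint T x'‖ ^ 2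
      ≤ ‖x - x'‖ * ‖(T * adjoint T) x - (T * adjoint T) x'‖ := by
    have h1 : ‖adjoint T x - adjoint T x'‖ ^ 2
        = RCLike.re (inner ℂ (adjoint T (x - x')) (adjoint T (x - x')) : ℂ) := by
      rw [inner_self_eq_norm_sq]; rw [map_sub]
    rw [h1, adjoint_inner_left]
    calc RCLike.re (inner ℂ (x - x') (T (adjoint T (x - x'))) : ℂ)
        ≤ ‖(inner ℂ (x - x') (T (adjoint T (x - x'))) : ℂ)‖ := RCLike.re_le_norm _
      _ ≤ ‖x - x'‖ * ‖T (adjoint T (x - x'))‖ := norm_inner_le_norm _ _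
      _ = ‖x - x'‖ * ‖(T * adjoint T) x - (T * adjoint T) x'‖ := by
          congr 1
          rw [ContinuousLinearMap.mul_apply, ContinuousLinearMap.mul_apply, ← map_sub, ← map_sub]
  have hxx' : ‖x - x'‖ ≤ 2 := by
    rw [mem_closedBall_zero_iff] at hx
    have := mem_closedBall_zero_iff.mp (hg1 ⟨y, hyt⟩)
    calc ‖x - x'‖ ≤ ‖x‖ + ‖x'‖ := norm_sub_le _ _
      _ ≤ 2 := by rw [← hx'] at this; linarith
  have hd2 : ‖(T * adjoint T) x - (T * adjoint T) x'‖ < ε ^ 2 / 4 := by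
    rw [← dist_eq_norm]
    have h2 : (T * adjoint T) x' = y := hg2 ⟨y, hyt⟩
    rw [h2]; exact hdy
  have : ‖adjoint T x - adjoint T x'‖ ^ 2 < ε ^ 2 := by
    have hnn : (0:ℝ) ≤ ‖(T * adjoint T) x - (T * adjoint T) x'‖ := norm_nonneg _
    nlinarith [norm_nonneg (adjoint T x - adjoint T x'), norm_nonneg (x - x')]
  exact lt_of_pow_lt_pow_left₀ 2 hε.le this

lemma aux_ker_findim (S K V : H →L[ℂ] H) (hS : ∀ x, ‖S x‖ = ‖x‖)
    (hK : IsCompactOperator ⇑K) (hV : V * (S + K) = 1)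
    (hker : FiniteDimensional ℂ (LinearMap.ker (adjoint (S + K) : H →ₗ[ℂ] H))) :
    FiniteDimensional ℂ (LinearMap.ker (adjoint S : H →ₗ[ℂ] H)) := by
  by_contra hinf
  set T : H →L[ℂ] H := S + K with hT
  set N : Submodule ℂ H := LinearMap.ker (adjoint T : H →ₗ[ℂ] H) with hN
  set W : Submodule ℂ H := LinearMap.ker (adjoint S : H →ₗ[ℂ] H) with hW
  haveI : CompleteSpace W := (ContinuousLinearMap.isClosed_ker (adjoint S)).completeSpace_coe
  obtain ⟨w, b, hb⟩ := exists_hilbertBasis ℂ W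
  -- w is infinite
  have hwinf : w.Infinite := by
    by_contra hfin
    rw [Set.not_infinite] at hfin
    apply hinf
    have hd := b.dense_span
    haveI hfd : FiniteDimensional ℂ (Submodule.span ℂ (Set.range ⇑b)) := by
      apply FiniteDimensional.span_of_finite
      rw [hb, Subtype.range_coe]; exact hfin
    have hclosed : IsClosed (↑(Submodule.span ℂ (Set.range ⇑b)) : Set W) :=
      Submodule.closed_of_finiteDimensional _
    have htop : Submodule.span ℂ (Set.range ⇑b) = ⊤ := by
      rw [← hclosed.submodule_topologicalClosure_eq]
      exact hd
    haveI : FiniteDimensional ℂ (⊤ : Submodule ℂ W) := htop ▸ hfd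
    exact (Submodule.topEquiv : (⊤ : Submodule ℂ W) ≃ₗ[ℂ] W).finiteDimensional
  -- orthonormal sequence in W ⊆ H
  let e0 : ℕ ↪ w := hwinf.natEmbedding
  let v : ℕ → H := fun n => ((b (e0 n) : W) : H)
  have hon : Orthonormal ℂ v := by
    have h1 : Orthonormal ℂ (⇑b ∘ ⇑e0) := b.orthonormal.comp e0 e0.injective
    have h2 := h1.comp_linearIsometry (W.subtypeₗᵢ)
    exact h2
  have hvW : ∀ n, adjoint S (v n) = 0 := by
    intro n
    have : (v n) ∈ W := SetLike.coe_mem _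
    exact LinearMap.mem_ker.mp this
  have hv1 : ∀ n, ‖v n‖ = 1 := fun n => hon.1 n
  -- weak null
  have hweak : ∀ x : H, Filter.Tendsto (fun n => (inner ℂ (v n) x : ℂ)) Filter.atTop (nhds 0) := by
    intro x
    have hs : Summable fun n => ‖(inner ℂ (v n) x : ℂ)‖ ^ 2 := hon.inner_products_summable x
    have h0 : Filter.Tendsto (fun n => ‖(inner ℂ (v n) x : ℂ)‖ ^ 2) Filter.atTop (nhds 0) :=
      hs.tendsto_atTop_zero
    rw [tendsto_zero_iff_norm_tendsto_zero]
    have := (h0.sqrt)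
    simpa [Real.sqrt_sq (norm_nonneg _)] using this
  -- compact image of adjoint K
  have hK' : IsCompactOperator ⇑(adjoint K) := aux_adjoint_compact K hK
  obtain ⟨Q, hQc, hQs⟩ :=
    (hK' : IsCompactOperator ⇑((adjoint K : H →L[ℂ] H) : H →ₗ[ℂ] H)).image_closedBall_subset_compact 1
  have humem : ∀ n, adjoint K (v n) ∈ Q := by
    intro n
    apply hQs
    exact ⟨v n, by rw [mem_closedBall_zero_iff, hv1 n], rfl⟩
  obtain ⟨y, hyQ, φ, hφ, hφtend⟩ := hQc.tendsto_subseq humem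
  -- y = 0
  have hy0 : y = 0 := by
    have hin : ∀ x : H, (inner ℂ x y : ℂ) = 0 := by
      intro x
      have h1 : Filter.Tendsto (fun n => (inner ℂ x (adjoint K (v (φ n))) : ℂ))
          Filter.atTop (nhds (inner ℂ x y)) :=
        Filter.Tendsto.inner tendsto_const_nhds hφtend
      have h2 : ∀ n, (inner ℂ x (adjoint K (v (φ n))) : ℂ) = inner ℂ (K x) (v (φ n)) := by
        intro n; rw [adjoint_inner_right]
      have h3 : Filter.Tendsto (fun n => (inner ℂ (K x) (v (φ n)) : ℂ))
          Filter.atTop (nhds 0) := by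
        have h4 : Filter.Tendsto (fun n => (inner ℂ (v n) (K x) : ℂ)) Filter.atTop (nhds 0) :=
          hweak (K x)
        have h5 := (h4.comp hφ.tendsto_atTop)
        have h6 : Filter.Tendsto (fun n => (starRingEnd ℂ) (inner ℂ (v (φ n)) (K x) : ℂ))
            Filter.atTop (nhds ((starRingEnd ℂ) 0)) := (Complex.continuous_conj.tendsto 0).comp h5
        simpa [inner_conj_symm] using h6
      rw [funext h2] at h1
      exact tendsto_nhds_unique h1 h3
    have := hin y
    rwa [inner_self_eq_zero] at this
  -- adjoint T applied to subsequence tends to 0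
  have hadjT : Filter.Tendsto (fun n => adjoint T (v (φ n))) Filter.atTop (nhds 0) := by
    have hTsum : adjoint T = adjoint S + adjoint K := by
      rw [hT, map_add]
    have : ∀ n, adjoint T (v (φ n)) = adjoint K (v (φ n)) := by
      intro n; rw [hTsum, add_apply, hvW, zero_add]
    rw [funext this]
    rwa [hy0] at hφtend
  -- bounded below on N-orthogonal
  haveI : CompleteSpace N := FiniteDimensional.complete ℂ N
  haveI : CompleteSpace (Nᗮ : Submodule ℂ H) :=
    (Submodule.isClosed_orthogonal N).completeSpace_coe
  set R : (Nᗮ : Submodule ℂ H) →L[ℂ] H := (adjoint T).comp (Nᗮ : Submodule ℂ H).subtypeL with hR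
  have hRker : LinearMap.ker (R : (Nᗮ : Submodule ℂ H) →ₗ[ℂ] H) = ⊥ := by
    rw [LinearMap.ker_eq_bot']
    rintro ⟨z, hz⟩ hz0
    have hzN : z ∈ N := by
      rw [hN]
      apply LinearMap.mem_ker.mpr
      exact hz0
    have hzz : (inner ℂ z z : ℂ) = 0 := (Submodule.mem_orthogonal N z).mp hz z hzN
    have : z = 0 := inner_self_eq_zero.mp hzz
    exact Subtype.ext this
  have hRrange : LinearMap.range (R : (Nᗮ : Submodule ℂ H) →ₗ[ℂ] H) = ⊤ := by
    rw [LinearMap.range_eq_top]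
    intro yy
    have hsurj : adjoint T (adjoint V yy) = yy := by
      have h1 : adjoint (V * T) = adjoint T * adjoint V := adjoint_comp V T
      have h2 : adjoint (V * T) = 1 := by
        rw [hV, ContinuousLinearMap.one_def, adjoint_id]
      have := congrArg (fun A : H →L[ℂ] H => A yy) (h1.symm.trans h2)
      simpa [mul_apply] using this
    set x := adjoint V yy with hx
    refine ⟨⟨x - (Submodule.orthogonalProjectionOnto N x : H), N.sub_starProjection_mem_orthogonal x⟩, ?_⟩
    have hPN : ((Submodule.orthogonalProjectionOnto N x : H)) ∈ N := SetLike.coe_mem _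
    have hP0 : adjoint T ((Submodule.orthogonalProjectionOnto N x : H)) = 0 := LinearMap.mem_ker.mp hPN
    show adjoint T (x - (Submodule.orthogonalProjectionOnto N x : H)) = yy
    rw [map_sub, hP0, sub_zero, hx, hsurj]
  set E := ContinuousLinearEquiv.ofBijective R hRker hRrange with hE
  have hbound : ∀ z : (Nᗮ : Submodule ℂ H), ‖z‖ ≤ ‖(E.symm : H →L[ℂ] (Nᗮ : Submodule ℂ H))‖ * ‖R z‖ := by
    intro z
    have h1 : E.symm (R z) = z := by
      have : R z = E z := rfl
      rw [this, ContinuousLinearEquiv.symm_apply_apply]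
    calc ‖z‖ = ‖E.symm (R z)‖ := by rw [h1]
      _ ≤ ‖(E.symm : H →L[ℂ] (Nᗮ : Submodule ℂ H))‖ * ‖R z‖ :=
        (E.symm : H →L[ℂ] (Nᗮ : Submodule ℂ H)).le_opNorm _
  -- decompose v (φ n)
  set p : ℕ → H := fun n => (Submodule.orthogonalProjectionOnto N (v (φ n)) : H) with hp
  set q : ℕ → (Nᗮ : Submodule ℂ H) := fun n =>
    ⟨v (φ n) - p n, N.sub_starProjection_mem_orthogonal (v (φ n))⟩ with hq
  have hRq : ∀ n, R (q n) = adjoint T (v (φ n)) := by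
    intro n
    have hPn : p n ∈ N := SetLike.coe_mem _
    have h0 : adjoint T (p n) = 0 := LinearMap.mem_ker.mp hPn
    show adjoint T (v (φ n) - p n) = adjoint T (v (φ n))
    rw [map_sub, h0, sub_zero]
  have hqto : Filter.Tendsto (fun n => ((q n : H))) Filter.atTop (nhds 0) := by
    rw [tendsto_zero_iff_norm_tendsto_zero]
    have hRto : Filter.Tendsto (fun n => ‖R (q n)‖) Filter.atTop (nhds 0) := by
      have := hadjT.norm
      simp only [norm_zero] at this
      have heq : (fun n => ‖R (q n)‖) = fun n => ‖adjoint T (v (φ n))‖ :=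
        funext fun n => by rw [hRq]
      rw [heq]; exact this
    apply squeeze_zero (fun n => norm_nonneg _) (fun n => ?_)
      (by simpa using hRto.const_mul ‖(E.symm : H →L[ℂ] (Nᗮ : Submodule ℂ H))‖)
    calc ‖((q n : H))‖ = ‖q n‖ := rfl
      _ ≤ ‖(E.symm : H →L[ℂ] (Nᗮ : Submodule ℂ H))‖ * ‖R (q n)‖ := hbound (q n)
  -- p n lies in compact ball of N
  haveI : ProperSpace N := FiniteDimensional.proper ℂ N
  have hpmem : ∀ n, Submodule.orthogonalProjectionOnto N (v (φ n)) ∈ closedBall (0 : N) 1 := by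
    intro n
    rw [mem_closedBall_zero_iff]
    calc ‖Submodule.orthogonalProjectionOnto N (v (φ n))‖
        ≤ ‖Submodule.orthogonalProjectionOnto N‖ * ‖v (φ n)‖ := (Submodule.orthogonalProjectionOnto N).le_opNorm _
      _ ≤ 1 * ‖v (φ n)‖ := by gcongr; exact Submodule.orthogonalProjectionOnto_norm_le N
      _ = 1 := by rw [one_mul, hv1]
  obtain ⟨pl, hplmem, ψ, hψ, hψtend⟩ := (isCompact_closedBall (0:N) 1).tendsto_subseq hpmem
  -- v (φ (ψ n)) converges
  have hvconv : Filter.Tendsto (fun n => v (φ (ψ n))) Filter.atTop (nhds (pl : H)) := by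
    have h1 : Filter.Tendsto (fun n => p (ψ n)) Filter.atTop (nhds (pl : H)) := by
      have := (continuous_subtype_val.tendsto pl).comp hψtend
      exact this
    have h2 : Filter.Tendsto (fun n => ((q (ψ n) : H))) Filter.atTop (nhds 0) :=
      hqto.comp hψ.tendsto_atTop
    have h3 := h1.add h2
    rw [add_zero] at h3
    have h4 : (fun n => v (φ (ψ n))) = fun n => p (ψ n) + ((q (ψ n) : H)) := by
      funext n
      show v (φ (ψ n)) = p (ψ n) + (v (φ (ψ n)) - p (ψ n))
      abel
    rw [h4]; exact h3
  -- contradiction with orthonormality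
  have hcauchy := hvconv.cauchySeq
  rw [Metric.cauchySeq_iff] at hcauchy
  obtain ⟨M, hM⟩ := hcauchy 1 one_pos
  have hne : φ (ψ (M + 1)) ≠ φ (ψ M) := by
    intro hcontra
    have := hψ.injective (hφ.injective hcontra)
    omega
  have hd := hM (M+1) (by omega) M (by omega)
  have h2 : dist (v (φ (ψ (M+1)))) (v (φ (ψ M))) ^ 2 = 2 := by
    rw [dist_eq_norm, @norm_sub_sq ℂ]
    rw [hv1, hv1]
    have : (inner ℂ (v (φ (ψ (M+1)))) (v (φ (ψ M))) : ℂ) = 0 := hon.2 hne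
    rw [this]
    simp
    norm_num
  nlinarith [dist_nonneg (x := v (φ (ψ (M+1)))) (y := v (φ (ψ M)))]

end Helpers

open ContinuousLinearMap

/-- Abstract classification: a left-invertible, finite-index shift `M_z` on an
analytic Hilbert space is compact + isometry iff the operator `C`, given by
`(C f)(w) = ⟨f, (1 - z conj(w)) k(·, w)⟩`, is compact. (Mathlib's inner ℂ product
is conjugate-linear in the first argument; the paper's `⟨f, g⟩`, linear in the
first argument, is `⟪g, f⟫`.) -/
theorem shift_compact_add_isometry_iff_C_compact
    (H : Type*) [NormedAddCommGroup H] [InnerProductSpace ℂ H] [CompleteSpace H]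
    (k : ℂ → H)
    (hdense : Dense (↑(Submodule.span ℂ (k '' {w : ℂ | ‖w‖ < 1})) : Set H))
    (Mz : H →L[ℂ] H)
    (hMz : ∀ f : H, ∀ w : ℂ, ‖w‖ < 1 →
      (inner ℂ (k w) (Mz f) : ℂ) = w * inner ℂ (k w) f)
    (hleft : ∃ V : H →L[ℂ] H, V * Mz = 1)
    (hker : FiniteDimensional ℂ (LinearMap.ker (adjoint Mz : H →ₗ[ℂ] H)))
    (C : H →L[ℂ] H)
    (hC : ∀ f : H, ∀ w : ℂ, ‖w‖ < 1 →
      (inner ℂ (k w) (C f) : ℂ) = inner ℂ (k w - (starRingEnd ℂ) w • Mz (k w)) f) :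
    (∃ S K : H →L[ℂ] H, (∀ x, ‖S x‖ = ‖x‖) ∧ IsCompactOperator ⇑K ∧ Mz = S + K) ↔
      IsCompactOperator ⇑C := by
  -- Step 1 : identify C
  have hCeq : C = 1 - Mz * adjoint Mz := by
    ext f
    have hsub : ∀ v ∈ Submodule.span ℂ (k '' {w : ℂ | ‖w‖ < 1}),
        (inner ℂ v (C f - (f - Mz (adjoint Mz f))) : ℂ) = 0 := by
      intro v hv
      induction hv using Submodule.span_induction with
      | mem x hx =>
        obtain ⟨w, hw, rfl⟩ := hx
        rw [inner_sub_right, inner_sub_right, hC f w hw, inner_sub_left, inner_smul_left,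
          hMz _ w hw, adjoint_inner_right, Complex.conj_conj]
        ring
      | zero => simp
      | add x y _ _ hx hy => rw [inner_add_left, hx, hy, add_zero]
      | smul c x _ hx => rw [inner_smul_left, hx, mul_zero]
    have hmem : C f - (f - Mz (adjoint Mz f)) ∈
        (Submodule.span ℂ (k '' {w : ℂ | ‖w‖ < 1}))ᗮ := by
      rw [Submodule.mem_orthogonal]
      exact hsub
    have horth : (Submodule.span ℂ (k '' {w : ℂ | ‖w‖ < 1}))ᗮ = ⊥ := by
      rw [← Submodule.topologicalClosure_eq_top_iff]
      exact Submodule.dense_iff_topologicalClosure_eq_top.mp hdense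
    rw [horth, Submodule.mem_bot, sub_eq_zero] at hmem
    rw [hmem]
    simp [sub_apply, one_apply, mul_apply]
  rw [hCeq]
  constructor
  · -- forward
    rintro ⟨S, K, hSiso, hKc, hSK⟩
    obtain ⟨V, hV⟩ := hleft
    have hkS : FiniteDimensional ℂ (LinearMap.ker (adjoint S : H →ₗ[ℂ] H)) := by
      refine aux_ker_findim S K V hSiso hKc ?_ ?_
      · rw [← hSK]; exact hV
      · rw [← hSK]; exact hker
    have hSS : adjoint S * S = 1 := by
      have hiso : ∀ x y : H, (inner ℂ (S x) (S y) : ℂ) = inner ℂ x y := by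
        intro x y
        let g : H →ₗᵢ[ℂ] H := ⟨(S : H →ₗ[ℂ] H), hSiso⟩
        exact g.inner_map_map x y
      ext x
      apply ext_inner_right ℂ
      intro y
      rw [ContinuousLinearMap.mul_apply, adjoint_inner_left, ContinuousLinearMap.one_apply]
      exact hiso x y
    have hadjsum : adjoint (S + K) = adjoint S + adjoint K := map_add adjoint S K
    have hdecomp : (1 : H →L[ℂ] H) - Mz * adjoint Mz
        = (1 - S * adjoint S) - (S * adjoint K + K * adjoint S + K * adjoint K) := by
      rw [hSK, hadjsum]
      noncomm_ring
    rw [hdecomp]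
    have hKadj := aux_adjoint_compact K hKc
    have c1 : IsCompactOperator ⇑(1 - S * adjoint S : H →L[ℂ] H) := by
      apply aux_finrank_compact _ (LinearMap.ker (adjoint S : H →ₗ[ℂ] H))
      intro x
      rw [LinearMap.mem_ker]
      show adjoint S ((1 - S * adjoint S) x) = 0
      rw [sub_apply, ContinuousLinearMap.one_apply, map_sub, ContinuousLinearMap.mul_apply]
      have h := congrArg (fun A : H →L[ℂ] H => A (adjoint S x)) hSS
      simp only [ContinuousLinearMap.mul_apply, ContinuousLinearMap.one_apply] at h
      rw [h, sub_self]
    have c2 : IsCompactOperator ⇑(S * adjoint K) := hKadj.clm_comp S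
    have c3 : IsCompactOperator ⇑(K * adjoint S) := hKc.comp_clm (adjoint S)
    have c4 : IsCompactOperator ⇑(K * adjoint K) := hKc.comp_clm (adjoint K)
    have hfin := c1.sub ((c2.add c3).add c4)
    have hco : ⇑((1 - S * adjoint S) - (S * adjoint K + K * adjoint S + K * adjoint K))
        = ⇑(1 - S * adjoint S : H →L[ℂ] H)
          - (⇑(S * adjoint K) + ⇑(K * adjoint S) + ⇑(K * adjoint K)) := by
      funext x
      simp [sub_apply, add_apply]
    rw [hco]
    exact hfin
  · -- backward
    intro hCc
    obtain ⟨V, hV⟩ := hleft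
    by_cases htriv : ∀ x : H, x = 0
    · refine ⟨Mz, 0, fun x => ?_, ?_, by simp⟩
      · rw [htriv (Mz x), htriv x]
      · have : ⇑(0 : H →L[ℂ] H) = (0 : H → H) := rfl
        rw [this]
        exact isCompactOperator_zero
    push_neg at htriv
    obtain ⟨x₀, hx₀⟩ := htriv
    have hVx : ∀ x : H, V (Mz x) = x := by
      intro x
      have := congrArg (fun B : H →L[ℂ] H => B x) hV
      simpa [mul_apply, one_apply] using this
    have hVne : V ≠ 0 := by
      intro h
      exact hx₀ (by rw [← hVx x₀, h, zero_apply])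
    have hVpos : (0:ℝ) < ‖V‖ := norm_pos_iff.mpr hVne
    set A : H →L[ℂ] H := adjoint Mz * Mz with hA
    have hlow : ∀ x : H, ‖x‖ ≤ ‖V‖ * ‖Mz x‖ := fun x => by
      calc ‖x‖ = ‖V (Mz x)‖ := by rw [hVx]
        _ ≤ ‖V‖ * ‖Mz x‖ := V.le_opNorm _
    have hU : IsUnit A := by
      apply isUnit_of_forall_le_norm_inner_map A (c := ⟨(‖V‖^2)⁻¹, by positivity⟩)
      · apply NNReal.coe_lt_coe.mp
        show (0:ℝ) < (‖V‖^2)⁻¹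
        positivity
      · intro x
        have h1 : (inner ℂ (A x) x : ℂ) = inner ℂ (Mz x) (Mz x) := by
          rw [hA, ContinuousLinearMap.mul_apply, adjoint_inner_left]
        rw [h1, inner_self_eq_norm_sq_to_K, norm_pow, RCLike.norm_ofReal, abs_norm]
        show ‖x‖ ^ 2 * (‖V‖^2)⁻¹ ≤ ‖Mz x‖ ^ 2
        rw [← div_eq_mul_inv, div_le_iff₀ (by positivity)]
        nlinarith [hlow x, norm_nonneg x, norm_nonneg (Mz x)]
    obtain ⟨u, hu⟩ := hU
    set Ainv : H →L[ℂ] H := ↑u⁻¹ with hAinvdef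
    have hAinvA : Ainv * A = 1 := by rw [hAinvdef, ← hu]; exact u.inv_mul
    have hAAinv : A * Ainv = 1 := by rw [hAinvdef, ← hu]; exact u.mul_inv
    have hA_sa : IsSelfAdjoint A := by
      rw [hA, ← star_eq_adjoint]
      exact IsSelfAdjoint.star_mul_self Mz
    have hAinv_sa : IsSelfAdjoint Ainv := by
      have h1 : star Ainv * A = 1 := by
        have h2 := congrArg star hAAinv
        rw [star_mul, star_one, hA_sa.star_eq] at h2
        exact h2
      show star Ainv = Ainv
      calc star Ainv = star Ainv * (A * Ainv) := by rw [hAAinv, mul_one]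
        _ = (star Ainv * A) * Ainv := by rw [← mul_assoc]
        _ = Ainv := by rw [h1, one_mul]
    have hA_nonneg : (0 : H →L[ℂ] H) ≤ A := by
      rw [hA, ← star_eq_adjoint]
      exact star_mul_self_nonneg Mz
    have hAinv_nonneg : (0 : H →L[ℂ] H) ≤ Ainv := by
      have h := star_left_conjugate_nonneg hA_nonneg Ainv
      rwa [hAinv_sa.star_eq, hAinvA, one_mul] at h
    set B : H →L[ℂ] H := CFC.sqrt Ainv with hBdef
    have hB_nonneg : (0 : H →L[ℂ] H) ≤ B := CFC.sqrt_nonneg Ainv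
    have hBB : B * B = Ainv := CFC.sqrt_mul_sqrt_self Ainv hAinv_nonneg
    have hB_sa : IsSelfAdjoint B := IsSelfAdjoint.of_nonneg hB_nonneg
    have hcomm : Commute B Ainv := by
      have h := cfcₙ_commute_cfcₙ (R := NNReal) NNReal.sqrt id Ainv
      rw [cfcₙ_id NNReal Ainv] at h
      exact h
    have hcommA : Commute B A := by
      have h3 := hcomm.units_inv_right (u := u⁻¹)
      rw [inv_inv] at h3
      rw [hu] at h3
      exact h3
    have hBAB : B * A * B = 1 := by
      calc B * A * B = (A * B) * B := by rw [hcommA.eq]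
        _ = A * (B * B) := by rw [mul_assoc]
        _ = A * Ainv := by rw [hBB]
        _ = 1 := hAAinv
    set S : H →L[ℂ] H := Mz * B with hSdef
    have hSiso : ∀ x, ‖S x‖ = ‖x‖ := by
      intro x
      have h1 : (inner ℂ (S x) (S x) : ℂ) = inner ℂ x x := by
        calc (inner ℂ (S x) (S x) : ℂ) = inner ℂ (Mz (B x)) (Mz (B x)) := rfl
          _ = inner ℂ (adjoint Mz (Mz (B x))) (B x) := by rw [adjoint_inner_left]
          _ = inner ℂ (A (B x)) (B x) := rfl
          _ = inner ℂ (adjoint B (A (B x))) x := (adjoint_inner_left B x (A (B x))).symm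
          _ = inner ℂ (B (A (B x))) x := by rw [hB_sa.adjoint_eq]
          _ = inner ℂ ((B * A * B) x) x := rfl
          _ = inner ℂ x x := by rw [hBAB, ContinuousLinearMap.one_apply]
      have h2 : ‖S x‖ ^ 2 = ‖x‖ ^ 2 := by
        have h3 : RCLike.re (inner ℂ (S x) (S x) : ℂ) = RCLike.re (inner ℂ x x : ℂ) := by rw [h1]
        rwa [inner_self_eq_norm_sq, inner_self_eq_norm_sq] at h3
      rw [← Real.sqrt_sq (norm_nonneg (S x)), ← Real.sqrt_sq (norm_nonneg x), h2]
    -- compactness of the defect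
    have hA1c : IsCompactOperator ⇑(1 - A) := by
      have eX : adjoint Mz * ((1 - Mz * adjoint Mz) * Mz) = A - A * A := by
        rw [hA]; noncomm_ring
      have e1 : (1 : H →L[ℂ] H) - A = Ainv * (adjoint Mz * ((1 - Mz * adjoint Mz) * Mz)) := by
        rw [eX, mul_sub, hAinvA, ← mul_assoc, hAinvA, one_mul]
      rw [e1]
      exact ((hCc.comp_clm Mz).clm_comp (adjoint Mz)).clm_comp Ainv
    have hUB : IsUnit ((1 : H →L[ℂ] H) + B) := by
      apply isUnit_of_forall_le_norm_inner_map ((1 : H →L[ℂ] H) + B) (c := 1) one_pos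
      intro x
      have hre : RCLike.re (inner ℂ (((1 : H →L[ℂ] H) + B) x) x : ℂ)
          = RCLike.re (inner ℂ x x : ℂ) + RCLike.re (inner ℂ (B x) x : ℂ) := by
        rw [add_apply, ContinuousLinearMap.one_apply, inner_add_left, map_add]
      have h1 : 0 ≤ RCLike.re (inner ℂ (B x) x : ℂ) :=
        (RCLike.nonneg_iff.mp (((nonneg_iff_isPositive B).mp hB_nonneg).inner_nonneg_left x)).1
      have h2 : ‖x‖ ^ 2 ≤ RCLike.re (inner ℂ (((1 : H →L[ℂ] H) + B) x) x : ℂ) := by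
        rw [hre, inner_self_eq_norm_sq]
        linarith
      calc ‖x‖ ^ 2 * ((1:NNReal):ℝ) = ‖x‖ ^ 2 := by norm_num
        _ ≤ RCLike.re (inner ℂ (((1 : H →L[ℂ] H) + B) x) x : ℂ) := h2
        _ ≤ ‖(inner ℂ (((1 : H →L[ℂ] H) + B) x) x : ℂ)‖ := RCLike.re_le_norm _
    obtain ⟨wu, hwu⟩ := hUB
    have h1Ainv : (1 : H →L[ℂ] H) - Ainv = -(Ainv * (1 - A)) := by
      rw [mul_sub, mul_one, hAinvA, neg_sub]
    have hAinv1c : IsCompactOperator ⇑((1 : H →L[ℂ] H) - Ainv) := by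
      rw [h1Ainv]
      have h5 : IsCompactOperator ⇑(Ainv * (1 - A)) := hA1c.clm_comp Ainv
      have h6 := h5.neg
      have h7 : ⇑(-(Ainv * (1 - A))) = -⇑(Ainv * (1 - A)) := rfl
      rw [h7]; exact h6
    have e2 : (1 : H →L[ℂ] H) - B = (1 - Ainv) * ↑wu⁻¹ := by
      have h3 : ((1 : H →L[ℂ] H) - B) * (1 + B) = 1 - Ainv := by
        rw [← hBB]; noncomm_ring
      have h4 : ((1 : H →L[ℂ] H) + B) * ↑wu⁻¹ = 1 := by rw [← hwu]; exact wu.mul_inv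
      calc (1 : H →L[ℂ] H) - B = (1 - B) * ((1 + B) * ↑wu⁻¹) := by rw [h4, mul_one]
        _ = ((1 - B) * (1 + B)) * ↑wu⁻¹ := by rw [mul_assoc]
        _ = (1 - Ainv) * ↑wu⁻¹ := by rw [h3]
    have h1Bc : IsCompactOperator ⇑((1 : H →L[ℂ] H) - B) := by
      rw [e2]
      exact hAinv1c.comp_clm _
    refine ⟨S, Mz - S, hSiso, ?_, by abel⟩
    have hMS : Mz - S = Mz * (1 - B) := by rw [hSdef, mul_sub, mul_one]
    rw [hMS]
    exact h1Bc.clm_comp Mz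
end
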